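/- Let B be a q×q symmetric matrix with strictly positive entries and let c ∈ ℝ^q have strictly positive entries. Then the infimum defining λ is attained at some vector v* with strictly positive entries, and any such minimizer satisfies 1/v* + B diag(c)(v* − 1_q) = λ · 1_q (where 1/v* denotes the entrywise inverse) and λ_max(diag(c)^{1/2} B diag(c)^{1/2} − diag(v*)^{-1}) ≤ 0. -/
import Mathlib


open MeasureTheory ProbabilityTheory Matrix

noncomputable section

/-- squared ℓ² norm of a real vector -/
def nsqR {q : ℕ} (v : Fin q → ℝ) : ℝ := ∑ i, v i ^ 2

/-- Rayleigh quotient ⟨v, M v⟩ of a real matrix at a vector -/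
def rayR {q : ℕ} (M : Matrix (Fin q) (Fin q) ℝ) (v : Fin q → ℝ) : ℝ := v ⬝ᵥ M.mulVec v

/-- largest eigenvalue of a real symmetric matrix, characterized as the supremum of the
Rayleigh quotient over ℓ²-unit vectors -/
def lmaxR {q : ℕ} (M : Matrix (Fin q) (Fin q) ℝ) : ℝ :=
  sSup {x | ∃ v, nsqR v = 1 ∧ x = rayR M v}

/-- the quantity λ = inf_{v > 0} max{λ_max(diag(c)^{1/2} B diag(c)^{1/2} +
diag(B diag(c)(v - 1))), λ_max(diag(v)⁻¹ + diag(B diag(c)(v - 1)))} -/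
def lamVal {q : ℕ} (B : Matrix (Fin q) (Fin q) ℝ) (c : Fin q → ℝ) : ℝ :=
  sInf {x | ∃ v : Fin q → ℝ, (∀ k, 0 < v k) ∧
    x = max
      (lmaxR (Matrix.diagonal (fun k => Real.sqrt (c k)) * B *
          Matrix.diagonal (fun k => Real.sqrt (c k)) +
        Matrix.diagonal ((B * Matrix.diagonal c).mulVec (v - 1))))
      (lmaxR (Matrix.diagonal (fun k => (v k)⁻¹) +
        Matrix.diagonal ((B * Matrix.diagonal c).mulVec (v - 1))))}

/-- the quantity λ_∅ = inf_{v > 0} λ_max(diag(v)⁻¹ + diag(B diag(c)(v - 1))) -/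
def lamNull {q : ℕ} (B : Matrix (Fin q) (Fin q) ℝ) (c : Fin q → ℝ) : ℝ :=
  sInf {x | ∃ v : Fin q → ℝ, (∀ k, 0 < v k) ∧
    x = lmaxR (Matrix.diagonal (fun k => (v k)⁻¹) +
      Matrix.diagonal ((B * Matrix.diagonal c).mulVec (v - 1)))}

variable {q : ℕ}

lemma nsqR_single (k : Fin q) : nsqR (Pi.single k 1) = 1 := by
  simp [nsqR, Pi.single_apply]

lemma raySet_nonempty (hq : 0 < q) (M : Matrix (Fin q) (Fin q) ℝ) :
    {x | ∃ v, nsqR v = 1 ∧ x = rayR M v}.Nonempty :=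
  ⟨rayR M (Pi.single ⟨0, hq⟩ 1), ⟨_, nsqR_single _, rfl⟩⟩

lemma abs_le_one_of_nsq (v : Fin q → ℝ) (hv : nsqR v = 1) (i : Fin q) : |v i| ≤ 1 := by
  have h1 : v i ^ 2 ≤ 1 := by
    rw [← hv]
    exact Finset.single_le_sum (fun j _ => sq_nonneg (v j)) (Finset.mem_univ i)
  nlinarith [abs_nonneg (v i), sq_abs (v i)]

lemma rayR_le_of_nsq (M : Matrix (Fin q) (Fin q) ℝ) (v : Fin q → ℝ) (hv : nsqR v = 1) :
    rayR M v ≤ ∑ i, ∑ j, |M i j| := by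
  have : rayR M v = ∑ i, ∑ j, v i * (M i j * v j) := by
    simp [rayR, dotProduct, mulVec, Finset.mul_sum]
  rw [this]
  refine Finset.sum_le_sum fun i _ => Finset.sum_le_sum fun j _ => ?_
  calc v i * (M i j * v j) ≤ |v i * (M i j * v j)| := le_abs_self _
    _ = |v i| * |M i j| * |v j| := by rw [abs_mul, abs_mul, mul_assoc]
    _ ≤ 1 * |M i j| * 1 := by
        gcongr
        · exact abs_le_one_of_nsq v hv i
        · exact abs_le_one_of_nsq v hv j
    _ = |M i j| := by ring

lemma raySet_bddAbove (M : Matrix (Fin q) (Fin q) ℝ) :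
    BddAbove {x | ∃ v, nsqR v = 1 ∧ x = rayR M v} := by
  refine ⟨∑ i, ∑ j, |M i j|, fun x hx => ?_⟩
  obtain ⟨v, hv, rfl⟩ := hx
  exact rayR_le_of_nsq M v hv

lemma le_lmaxR (M : Matrix (Fin q) (Fin q) ℝ) (v : Fin q → ℝ) (hv : nsqR v = 1) :
    rayR M v ≤ lmaxR M :=
  le_csSup (raySet_bddAbove M) ⟨v, hv, rfl⟩

lemma lmaxR_le (hq : 0 < q) (M : Matrix (Fin q) (Fin q) ℝ) {a : ℝ}
    (h : ∀ v, nsqR v = 1 → rayR M v ≤ a) : lmaxR M ≤ a :=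
  csSup_le (raySet_nonempty hq M) (by rintro x ⟨v, hv, rfl⟩; exact h v hv)

lemma rayR_add_diagonal (M : Matrix (Fin q) (Fin q) ℝ) (w v : Fin q → ℝ) :
    rayR (M + diagonal w) v = rayR M v + ∑ k, w k * v k ^ 2 := by
  simp only [rayR, add_mulVec, dotProduct_add]
  congr 1
  simp [dotProduct, mulVec_diagonal]
  exact Finset.sum_congr rfl fun k _ => by ring

lemma rayR_diagonal (w v : Fin q → ℝ) :
    rayR (diagonal w) v = ∑ k, w k * v k ^ 2 := by
  have := rayR_add_diagonal 0 w v
  simpa [rayR] using this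

lemma coord_le_lmaxR_diagonal (w : Fin q → ℝ) (k : Fin q) : w k ≤ lmaxR (diagonal w) := by
  have h := le_lmaxR (diagonal w) (Pi.single k 1) (nsqR_single k)
  rw [rayR_diagonal] at h
  simpa [Pi.single_apply] using h

lemma key_le (hq : 0 < q) (M : Matrix (Fin q) (Fin q) ℝ) (w w' : Fin q → ℝ) {s : ℝ}
    (hs : ∀ k, w k - w' k ≤ s) :
    lmaxR (M + diagonal w) ≤ lmaxR (M + diagonal w') + s := by
  refine lmaxR_le hq _ fun v hv => ?_
  have h1 := le_lmaxR (M + diagonal w') v hv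
  rw [rayR_add_diagonal] at h1 ⊢
  have h2 : ∑ k, w k * v k ^ 2 - ∑ k, w' k * v k ^ 2 ≤ s := by
    rw [← Finset.sum_sub_distrib]
    calc ∑ k, (w k * v k ^ 2 - w' k * v k ^ 2) ≤ ∑ k, s * v k ^ 2 := by
          refine Finset.sum_le_sum fun k _ => ?_
          have := mul_le_mul_of_nonneg_right (hs k) (sq_nonneg (v k))
          nlinarith [sq_nonneg (v k)]
      _ = s := by rw [← Finset.mul_sum]; rw [show ∑ k, v k ^ 2 = nsqR v from rfl, hv, mul_one]
  linarith

lemma lmaxR_diagonal_le (hq : 0 < q) (w : Fin q → ℝ) {a : ℝ} (h : ∀ k, w k ≤ a) :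
    lmaxR (diagonal w) ≤ a := by
  have := key_le hq 0 w 0 (s := a) (by simpa using h)
  simp only [zero_add, Matrix.diagonal_zero, add_zero] at this
  have h0 : lmaxR (0 : Matrix (Fin q) (Fin q) ℝ) = 0 := by
    apply le_antisymm
    · exact lmaxR_le hq 0 (fun v hv => by simp [rayR])
    · have := le_lmaxR (0 : Matrix (Fin q) (Fin q) ℝ) (Pi.single ⟨0,hq⟩ 1) (nsqR_single _)
      simpa [rayR] using this
  rw [show Matrix.diagonal (0 : Fin q → ℝ) = 0 by ext i j; simp [Matrix.diagonal_apply]] at this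
  rw [h0, zero_add] at this
  exact this

lemma lmaxR_shift (hq : 0 < q) (M : Matrix (Fin q) (Fin q) ℝ) (w w' : Fin q → ℝ) {t : ℝ}
    (h : ∀ k, w k = w' k + t) :
    lmaxR (M + diagonal w) = lmaxR (M + diagonal w') + t := by
  have h1 := key_le hq M w w' (s := t) (fun k => by rw [h k]; ring_nf; exact le_refl _)
  have h2 := key_le hq M w' w (s := -t) (fun k => by rw [h k]; ring_nf; exact le_refl _)
  linarith

/-- objective function -/
def Fscore {q : ℕ} (A N : Matrix (Fin q) (Fin q) ℝ) (v : Fin q → ℝ) : ℝ :=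
  max (lmaxR (A + diagonal (N.mulVec (v - 1))))
    (lmaxR (diagonal (fun k => (v k)⁻¹) + diagonal (N.mulVec (v - 1))))

lemma lmaxR_lip {q : ℕ} (hq : 0 < q) (M : Matrix (Fin q) (Fin q) ℝ) :
    LipschitzWith 1 (fun w : Fin q → ℝ => lmaxR (M + diagonal w)) := by
  rw [lipschitzWith_iff_dist_le_mul]
  intro w w'
  rw [Real.dist_eq, NNReal.coe_one, one_mul, abs_le]
  have hb : ∀ (a b : Fin q → ℝ) (k : Fin q), a k - b k ≤ dist a b := by
    intro a b k
    calc a k - b k ≤ |a k - b k| := le_abs_self _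
      _ = dist (a k) (b k) := (Real.dist_eq _ _).symm
      _ ≤ dist a b := dist_le_pi_dist a b k
  constructor
  · linarith [key_le hq M w' w (s := dist w w') (fun k => by
      have := hb w' w k; rwa [dist_comm w' w] at this)]
  · linarith [key_le hq M w w' (s := dist w w') (fun k => hb w w' k)]

set_option maxHeartbeats 1000000 in
theorem main_aux {q : ℕ} (hq : 0 < q) (A N : Matrix (Fin q) (Fin q) ℝ)
    (hN : ∀ j k, 0 < N j k) :
    (∃ v : Fin q → ℝ, (∀ k, 0 < v k) ∧
      Fscore A N v = sInf {x | ∃ v : Fin q → ℝ, (∀ k, 0 < v k) ∧ x = Fscore A N v}) ∧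
    ∀ v : Fin q → ℝ, (∀ k, 0 < v k) →
      Fscore A N v = sInf {x | ∃ v : Fin q → ℝ, (∀ k, 0 < v k) ∧ x = Fscore A N v} →
      (∀ k, (v k)⁻¹ + N.mulVec (v - 1) k =
        sInf {x | ∃ v : Fin q → ℝ, (∀ k, 0 < v k) ∧ x = Fscore A N v}) ∧
      lmaxR (A - diagonal (fun k => (v k)⁻¹)) ≤ 0 := by
  haveI : Nonempty (Fin q) := ⟨⟨0, hq⟩⟩
  set S := {x | ∃ v : Fin q → ℝ, (∀ k, 0 < v k) ∧ x = Fscore A N v} with hS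
  set lam := sInf S with hlam
  -- basic quantities
  set Ktot := ∑ j, ∑ l, N j l with hKtot
  set b := Finset.univ.inf' Finset.univ_nonempty (fun k => N k k) with hbdef
  have hb : 0 < b := by
    rw [hbdef, Finset.lt_inf'_iff]
    exact fun k _ => hN k k
  have hKnn : 0 ≤ Ktot := Finset.sum_nonneg fun j _ =>
    Finset.sum_nonneg fun l _ => (hN j l).le
  -- coordinates of d
  have hdco : ∀ (v : Fin q → ℝ) (k : Fin q), N.mulVec (v - 1) k = ∑ l, N k l * (v l - 1) := by
    intro v k; simp [mulVec, dotProduct]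
  have hrowK : ∀ k, ∑ l, N k l ≤ Ktot := by
    intro k
    exact Finset.single_le_sum (f := fun j => ∑ l, N j l)
      (fun j _ => Finset.sum_nonneg fun l _ => (hN j l).le) (Finset.mem_univ k)
  have hd_lb : ∀ (v : Fin q → ℝ), (∀ j, 0 < v j) → ∀ k,
      b * v k - Ktot ≤ N.mulVec (v - 1) k := by
    intro v hv k
    rw [hdco]
    have h1 : ∑ l, N k l * (v l - 1) = (∑ l, N k l * v l) - ∑ l, N k l := by
      rw [← Finset.sum_sub_distrib]; exact Finset.sum_congr rfl fun l _ => by ring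
    have h2 : N k k * v k ≤ ∑ l, N k l * v l :=
      Finset.single_le_sum (f := fun l => N k l * v l)
        (fun l _ => mul_nonneg (hN k l).le (hv l).le) (Finset.mem_univ k)
    have h3 : b * v k ≤ N k k * v k :=
      mul_le_mul_of_nonneg_right (Finset.inf'_le _ (Finset.mem_univ k)) (hv k).le
    rw [h1]
    have := hrowK k
    linarith
  have hd_lb0 : ∀ (v : Fin q → ℝ), (∀ j, 0 < v j) → ∀ k,
      -Ktot ≤ N.mulVec (v - 1) k := by
    intro v hv k
    have := hd_lb v hv k
    nlinarith [hv k, hb]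
  -- coordinate lower bound for Fscore
  have hcoord : ∀ (v : Fin q → ℝ) (k : Fin q),
      (v k)⁻¹ + N.mulVec (v - 1) k ≤ Fscore A N v := by
    intro v k
    have h1 : (v k)⁻¹ + N.mulVec (v - 1) k ≤
        lmaxR (diagonal (fun j => (v j)⁻¹) + diagonal (N.mulVec (v - 1))) := by
      rw [Matrix.diagonal_add]
      exact coord_le_lmaxR_diagonal (fun j => (v j)⁻¹ + N.mulVec (v - 1) j) k
    exact h1.trans (le_max_right _ _)
  have hSbdd : BddBelow S := by
    refine ⟨-Ktot, ?_⟩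
    rintro x ⟨v, hv, rfl⟩
    have h1 := hcoord v ⟨0, hq⟩
    have h2 := hd_lb0 v hv ⟨0, hq⟩
    have h3 := inv_pos.2 (hv ⟨0, hq⟩)
    linarith
  have hlam_le : ∀ v : Fin q → ℝ, (∀ k, 0 < v k) → lam ≤ Fscore A N v :=
    fun v hv => csInf_le hSbdd ⟨v, hv, rfl⟩
  have h1pos : ∀ k, (0:ℝ) < (fun _ : Fin q => (1:ℝ)) k := fun _ => one_pos
  set M0 := Fscore A N (fun _ => 1) with hM0
  set M1 := |M0| + Ktot + b + 2 with hM1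
  have habs0 : (0:ℝ) ≤ |M0| := abs_nonneg M0
  have hM1pos : 0 < M1 := by rw [hM1]; linarith
  set C := Set.Icc (fun _ : Fin q => M1⁻¹) (fun _ : Fin q => M1 / b) with hC
  have hmemC : ∀ v : Fin q → ℝ, v ∈ C ↔ (∀ k, M1⁻¹ ≤ v k) ∧ (∀ k, v k ≤ M1 / b) := by
    intro v
    constructor
    · intro hv; exact ⟨fun k => hv.1 k, fun k => hv.2 k⟩
    · intro hv; exact ⟨fun k => hv.1 k, fun k => hv.2 k⟩
  have h1C : (fun _ : Fin q => (1:ℝ)) ∈ C := by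
    rw [hmemC]
    constructor
    · intro k
      have h1 : (1:ℝ) ≤ M1 := by rw [hM1]; linarith
      calc M1⁻¹ ≤ 1⁻¹ := by
            apply inv_anti₀ one_pos h1
        _ = 1 := inv_one
    · intro k
      rw [le_div_iff₀ hb, one_mul]
      rw [hM1]; linarith
  have hCcomp : IsCompact C := isCompact_Icc
  have hCne : C.Nonempty := ⟨_, h1C⟩
  have hdcont : Continuous (fun v : Fin q → ℝ => N.mulVec (v - 1)) := by
    apply continuous_pi; intro k
    have hrw : (fun v : Fin q → ℝ => N.mulVec (v - 1) k) =
        fun v => ∑ l, N k l * (v l - 1) := funext fun v => hdco v k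
    rw [hrw]
    exact continuous_finset_sum _ fun l _ =>
      continuous_const.mul ((continuous_apply l).sub continuous_const)
  have hg1 : Continuous (fun v : Fin q → ℝ => lmaxR (A + diagonal (N.mulVec (v - 1)))) :=
    (lmaxR_lip hq A).continuous.comp hdcont
  have hg2 : ContinuousOn (fun v : Fin q → ℝ =>
      lmaxR (diagonal (fun k => (v k)⁻¹) + diagonal (N.mulVec (v - 1)))) C := by
    have hrw : (fun v : Fin q → ℝ =>
        lmaxR (diagonal (fun k => (v k)⁻¹) + diagonal (N.mulVec (v - 1)))) =
        (fun w : Fin q → ℝ => lmaxR ((0 : Matrix (Fin q) (Fin q) ℝ) + diagonal w)) ∘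
          (fun v k => (v k)⁻¹ + N.mulVec (v - 1) k) := by
      funext v
      simp only [Function.comp_apply, zero_add, Matrix.diagonal_add]
    rw [hrw]
    apply (lmaxR_lip hq 0).continuous.comp_continuousOn
    apply continuousOn_pi.2; intro k
    apply ContinuousOn.add
    · apply ContinuousOn.inv₀ (continuous_apply k).continuousOn
      intro v hv
      have h1 := ((hmemC v).1 hv).1 k
      have h2 := inv_pos.2 hM1pos
      exact ne_of_gt (lt_of_lt_of_le h2 h1)
    · exact ((continuous_apply k).comp hdcont).continuousOn
  have hFcont : ContinuousOn (Fscore A N) C := by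
    unfold Fscore
    exact hg1.continuousOn.sup hg2
  obtain ⟨vs, hvsC, hvsmin⟩ := hCcomp.exists_isMinOn hCne hFcont
  have hvspos : ∀ k, 0 < vs k :=
    fun k => lt_of_lt_of_le (inv_pos.2 hM1pos) (((hmemC vs).1 hvsC).1 k)
  have hglobal : ∀ v : Fin q → ℝ, (∀ k, 0 < v k) → Fscore A N vs ≤ Fscore A N v := by
    intro v hv
    by_cases hvC : v ∈ C
    · exact hvsmin hvC
    · have hFvs1 : Fscore A N vs ≤ M0 := hvsmin h1C
      have habs : M0 ≤ |M0| := le_abs_self M0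
      rw [hmemC] at hvC
      rcases not_and_or.1 hvC with h | h
      · push_neg at h; obtain ⟨k, hk⟩ := h
        have hinv : M1 < (v k)⁻¹ := by
          have h5 : (M1⁻¹)⁻¹ < (v k)⁻¹ := by
            apply inv_strictAnti₀ (hv k) hk
          rwa [inv_inv] at h5
        have h2 := hd_lb0 v hv k
        have h3 := hcoord v k
        rw [hM1] at hinv
        linarith
      · push_neg at h; obtain ⟨k, hk⟩ := h
        have h4 : M1 < b * v k := by
          have := (div_lt_iff₀ hb).1 hk
          linarith [mul_comm (v k) b]
        have h2 := hd_lb v hv k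
        have h3 := hcoord v k
        have h5 := inv_pos.2 (hv k)
        rw [hM1] at h4
        linarith
  have hSne : S.Nonempty := ⟨Fscore A N (fun _ => 1), ⟨_, h1pos, rfl⟩⟩
  have hmin_eq : Fscore A N vs = lam :=
    le_antisymm
      (le_csInf hSne (by rintro x ⟨v, hv, rfl⟩; exact hglobal v hv))
      (hlam_le vs hvspos)
  refine ⟨⟨vs, hvspos, hmin_eq⟩, ?_⟩
  intro v hv hFv
  have hle : ∀ k, (v k)⁻¹ + N.mulVec (v - 1) k ≤ lam :=
    fun k => (hcoord v k).trans (le_of_eq hFv)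
  have hT1v : lmaxR (A + diagonal (N.mulVec (v - 1))) ≤ lam :=
    le_of_le_of_eq (le_max_left _ _) hFv
  have heq : ∀ k, (v k)⁻¹ + N.mulVec (v - 1) k = lam := by
    by_contra hne
    push_neg at hne
    obtain ⟨k, hk⟩ := hne
    have hklt : (v k)⁻¹ + N.mulVec (v - 1) k < lam := lt_of_le_of_ne (hle k) hk
    set g := lam - ((v k)⁻¹ + N.mulVec (v - 1) k) with hgdef
    have hgpos : 0 < g := by rw [hgdef]; linarith
    set m := Finset.univ.inf' Finset.univ_nonempty (fun j => N j k) with hmdef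
    have hm : 0 < m := by rw [hmdef, Finset.lt_inf'_iff]; exact fun j _ => hN j k
    have hm_le : ∀ i, m ≤ N i k := fun i => Finset.inf'_le _ (Finset.mem_univ i)
    have hvk := hv k
    set t := min (v k / 2) (g * (v k) ^ 2 / 4) with ht_def
    have htpos : 0 < t := lt_min (by linarith) (by positivity)
    have ht1 : t ≤ v k / 2 := min_le_left _ _
    have ht2 : t ≤ g * (v k) ^ 2 / 4 := min_le_right _ _
    set v' := v - t • (Pi.single k 1 : Fin q → ℝ) with hv'def
    have hv'co : ∀ j, v' j = v j - t * (if j = k then 1 else 0) := by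
      intro j; rw [hv'def]; simp [Pi.single_apply]
    have hv'k : v' k = v k - t := by rw [hv'co]; simp
    have hv'ne : ∀ j, j ≠ k → v' j = v j := by intro j hj; rw [hv'co]; simp [hj]
    have hv'pos : ∀ j, 0 < v' j := by
      intro j
      by_cases hj : j = k
      · subst hj; rw [hv'k]; linarith
      · rw [hv'ne j hj]; exact hv j
    have hd' : ∀ j, N.mulVec (v' - 1) j = N.mulVec (v - 1) j - t * N j k := by
      intro j
      have hsub1 : v' - 1 = (v - 1) - t • (Pi.single k 1 : Fin q → ℝ) := by
        rw [hv'def]; exact sub_right_comm v (t • (Pi.single k 1 : Fin q → ℝ)) 1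
      rw [hsub1, Matrix.mulVec_sub, Pi.sub_apply, Matrix.mulVec_smul, Pi.smul_apply,
        Matrix.mulVec_single]
      simp [smul_eq_mul]
    set eps := min (t * m) (g / 2) with hepsdef
    have hepspos : 0 < eps := lt_min (by positivity) (by linarith)
    have heps1 : eps ≤ t * m := min_le_left _ _
    have heps2 : eps ≤ g / 2 := min_le_right _ _
    clear_value g m t v' eps
    have hwb : ∀ j, (v' j)⁻¹ + N.mulVec (v' - 1) j ≤ lam - eps := by
      intro j
      have hNjk : m ≤ N j k := hm_le j
      by_cases hj : j = k
      · subst hj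
        rw [hv'k, hd']
        have hvt : 0 < v j - t := by linarith
        have hinv : (v j - t)⁻¹ ≤ (v j)⁻¹ + 2 * t / (v j) ^ 2 := by
          have hmul : 1 ≤ ((v j)⁻¹ + 2 * t / (v j) ^ 2) * (v j - t) := by
            have hvk0 : v j ≠ 0 := ne_of_gt hvk
            rw [← sub_nonneg]
            have hexp : ((v j)⁻¹ + 2 * t / (v j) ^ 2) * (v j - t) - 1 =
                (t * v j - 2 * t ^ 2) / (v j) ^ 2 := by
              field_simp
              ring
            rw [hexp]
            apply div_nonneg _ (by positivity)
            nlinarith [htpos.le, hvk, ht1]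
          calc (v j - t)⁻¹ = 1 * (v j - t)⁻¹ := (one_mul _).symm
            _ ≤ (((v j)⁻¹ + 2 * t / (v j) ^ 2) * (v j - t)) * (v j - t)⁻¹ :=
                mul_le_mul_of_nonneg_right hmul (inv_nonneg.2 hvt.le)
            _ = ((v j)⁻¹ + 2 * t / (v j) ^ 2) * ((v j - t) * (v j - t)⁻¹) := by ring
            _ = (v j)⁻¹ + 2 * t / (v j) ^ 2 := by
                rw [mul_inv_cancel₀ (ne_of_gt hvt), mul_one]
        have h2t : 2 * t / (v j) ^ 2 ≤ g / 2 := by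
          rw [div_le_div_iff₀ (by positivity) (by norm_num : (0:ℝ) < 2)]
          linarith [ht2]
        have hNkk : 0 ≤ t * N j j := mul_nonneg htpos.le (hN j j).le
        have hgd : g = lam - ((v j)⁻¹ + N.mulVec (v - 1) j) := hgdef
        linarith
      · rw [hv'ne j hj, hd']
        have h1 := hle j
        have h2 : t * m ≤ t * N j k := mul_le_mul_of_nonneg_left hNjk htpos.le
        linarith
    have hT2' : lmaxR (diagonal (fun j => (v' j)⁻¹) + diagonal (N.mulVec (v' - 1))) ≤
        lam - eps := by
      rw [Matrix.diagonal_add]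
      exact lmaxR_diagonal_le hq _ hwb
    have hT1' : lmaxR (A + diagonal (N.mulVec (v' - 1))) ≤ lam - eps := by
      have hkey := key_le hq A (N.mulVec (v' - 1)) (N.mulVec (v - 1)) (s := -(t * m))
        (fun j => by
          rw [hd' j]
          have hNjk : m ≤ N j k := hm_le j
          have h2 : t * m ≤ t * N j k := mul_le_mul_of_nonneg_left hNjk htpos.le
          linarith)
      linarith
    have hlt : Fscore A N v' ≤ lam - eps := max_le hT1' hT2'
    have := hlam_le v' hv'pos
    linarith
  refine ⟨heq, ?_⟩
  have hsub : A - diagonal (fun k => (v k)⁻¹) = A + diagonal (fun k => -(v k)⁻¹) := by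
    ext i j
    by_cases h : i = j <;> simp [Matrix.diagonal_apply, h, sub_eq_add_neg]
  have hshift := lmaxR_shift hq A (N.mulVec (v - 1)) (fun k => -(v k)⁻¹) (t := lam)
    (fun k => by have := heq k; linarith)
  rw [hsub]
  linarith

/-- Lemma: existence of a minimizer and first-order conditions for the
variational problem defining λ. -/
theorem lamVal_minimizer {q : ℕ} (hq : 0 < q)
    (B : Matrix (Fin q) (Fin q) ℝ) (hBsym : B.IsSymm) (hBpos : ∀ k l, 0 < B k l)
    (c : Fin q → ℝ) (hc : ∀ k, 0 < c k) :
    (∃ v : Fin q → ℝ, (∀ k, 0 < v k) ∧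
      max
        (lmaxR (Matrix.diagonal (fun k => Real.sqrt (c k)) * B *
            Matrix.diagonal (fun k => Real.sqrt (c k)) +
          Matrix.diagonal ((B * Matrix.diagonal c).mulVec (v - 1))))
        (lmaxR (Matrix.diagonal (fun k => (v k)⁻¹) +
          Matrix.diagonal ((B * Matrix.diagonal c).mulVec (v - 1)))) = lamVal B c) ∧
    ∀ v : Fin q → ℝ, (∀ k, 0 < v k) →
      max
        (lmaxR (Matrix.diagonal (fun k => Real.sqrt (c k)) * B *
            Matrix.diagonal (fun k => Real.sqrt (c k)) +
          Matrix.diagonal ((B * Matrix.diagonal c).mulVec (v - 1))))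
        (lmaxR (Matrix.diagonal (fun k => (v k)⁻¹) +
          Matrix.diagonal ((B * Matrix.diagonal c).mulVec (v - 1)))) = lamVal B c →
      (v⁻¹ + (B * Matrix.diagonal c).mulVec (v - 1) = fun _ => lamVal B c) ∧
      lmaxR (Matrix.diagonal (fun k => Real.sqrt (c k)) * B *
          Matrix.diagonal (fun k => Real.sqrt (c k)) -
        Matrix.diagonal (fun k => (v k)⁻¹)) ≤ 0 := by
  have hN : ∀ j k, 0 < (B * Matrix.diagonal c) j k := by
    intro j k
    rw [Matrix.mul_diagonal]
    exact mul_pos (hBpos j k) (hc k)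
  obtain ⟨hex, hmin⟩ := main_aux hq
    (Matrix.diagonal (fun k => Real.sqrt (c k)) * B *
      Matrix.diagonal (fun k => Real.sqrt (c k)))
    (B * Matrix.diagonal c) hN
  constructor
  · exact hex
  · intro v hv hFv
    obtain ⟨h1, h2⟩ := hmin v hv hFv
    exact ⟨funext fun k => h1 k, h2⟩
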